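/- Let r₀, r_∞ be distinct proper slopes and let s ≠ 0 be a real number. Let r₁, r₂ be proper slopes, not equal to r₀ or r_∞, admitting dual slopes r₁′, r₂′ with respect to r₀, r_∞ and s, such that the seven slopes r₁, r₂, r₁′, r₂′, −1, r₀, r_∞ are pairwise distinct. Then SD({r₀, r₁, r₁′, r₂, r₂′, r_∞}, 7/4) holds. -/

import Mathlib

/-!
Let `M` bound the six projections of `G` and let `P` be the set of pairs `(g, g') ∈ G²` with
`π_{r₀} g = π_{r₀} g'`; Cauchy–Schwarz over the fibres of `π_{r₀}` gives `|G|² ≤ M |P|`.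
Slice `P` by `v = s π_{r_∞}(g) + π_{-1}(g')`. Since `π_{-1}` is injective on `G` and `r₀ ≠ r_∞`,
a slice injects into `π_{r_∞}(G)`, so it has at most `M` elements; since `r₁ ≠ r₂`, it also
injects into the product of its `π_{r₁}`- and `π_{r₂}`-images. On `P` the dual identity reads
`v = x π_{rᵢ}(g) + y π_{rᵢ'}(g')`, so there are at most `M²` pairs `(v, π_{rᵢ}(g))`.
Cauchy–Schwarz over the slices gives `|P|² ≤ M · M² · M²`, hence `|G|⁴ ≤ M⁷`.
-/

/-- The projection `π_r : Z × Z → Z` associated to a slope `r ∈ ℝ ∪ {∞}`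
(`none` denotes the slope `∞`): `π_r(a,b) = a + r • b` and `π_∞(a,b) = b`. -/
noncomputable def piSlope {Z : Type*} [AddCommGroup Z] [Module ℝ Z]
    (r : Option ℝ) (g : Z × Z) : Z :=
  match r with
  | none => g.2
  | some c => g.1 + c • g.2

/-- `SDR R α`: there is a constant `C` such that for every real vector space `Z` and every
finite `G ⊆ Z × Z` on which `π_{-1}(a,b) = a - b` is injective, one has
`#G ≤ C·(max_{r ∈ R} #(π_r(G)))^α`. -/
def SDR (R : Finset (Option ℝ)) (α : ℝ) : Prop :=
  ∃ C : ℝ, ∀ (Z : Type) [AddCommGroup Z] [Module ℝ Z],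
    ∀ G : Set (Z × Z), G.Finite →
      Set.InjOn (piSlope (some (-1))) G →
      (G.ncard : ℝ) ≤ C * ((R.sup fun r => (piSlope r '' G).ncard : ℕ) : ℝ) ^ α

/-- `SDprop α`: for every `ε > 0` there is a finite set `R` of proper slopes
(slopes different from `-1`) with `SDR R (α + ε)`. -/
def SDprop (α : ℝ) : Prop :=
  ∀ ε : ℝ, 0 < ε →
    ∃ R : Finset (Option ℝ), (∀ r ∈ R, r ≠ some (-1)) ∧ SDR R (α + ε)

/-- `r'` is the dual slope of `r` with respect to `r₀`, `r_∞` and `s`. -/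
def IsDualSlope (r0 rinf : Option ℝ) (s : ℝ) (r r' : Option ℝ) : Prop :=
  ∃ x y z : ℝ, x ≠ 0 ∧ y ≠ 0 ∧
    ∀ (Z : Type) [AddCommGroup Z] [Module ℝ Z], ∀ g g' : Z × Z,
      s • piSlope rinf g + piSlope (some (-1)) g' =
        x • piSlope r g + y • piSlope r' g' + z • (piSlope r0 g - piSlope r0 g')

open Finset

section Combinatorics

variable {ι α β γ : Type*} [DecidableEq α] [DecidableEq β] [DecidableEq γ]

def fiberPairs (f : ι → α) (s : Finset ι) : Finset (ι × ι) :=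
  (s ×ˢ s).filter fun p => f p.1 = f p.2

@[simp]
lemma mem_fiberPairs {f : ι → α} {s : Finset ι} {p : ι × ι} :
    p ∈ fiberPairs f s ↔ p.1 ∈ s ∧ p.2 ∈ s ∧ f p.1 = f p.2 := by
  simp [fiberPairs, and_assoc]

lemma card_fiberPairs (f : ι → α) (s : Finset ι) :
    #(fiberPairs f s) = ∑ a ∈ s.image f, #{i ∈ s | f i = a} ^ 2 := by
  rw [card_eq_sum_card_fiberwise (f := fun p => f p.1) (t := s.image f)]
  · refine sum_congr rfl fun a _ => ?_
    rw [sq, ← card_product]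
    congr 1
    ext ⟨i, j⟩
    simp only [fiberPairs, mem_filter, mem_product]
    grind
  · intro p hp
    simp only [fiberPairs, coe_filter, mem_product, Set.mem_ofPred_eq] at hp
    exact mem_image_of_mem f hp.1.1

lemma sq_card_le_card_image_mul_card_fiberPairs (f : ι → α) (s : Finset ι) :
    #s ^ 2 ≤ #(s.image f) * #(fiberPairs f s) := by
  rw [card_fiberPairs, card_eq_sum_card_image f s]
  exact sq_sum_le_card_mul_sum_sq

lemma card_image_pair_eq_sum (w : ι → α) (f : ι → β) (s : Finset ι) :
    #(s.image fun i => (w i, f i)) = ∑ a ∈ s.image w, #({i ∈ s | w i = a}.image f) := by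
  rw [card_eq_sum_card_image Prod.fst, image_image]
  refine sum_congr rfl fun a _ => ?_
  rw [filter_image, image_congr (g := Prod.mk a ∘ f) (fun i hi => by simp_all), ← image_image,
    card_image_of_injective _ (Prod.mk_right_injective a)]

lemma sq_sum_le_mul_sum_mul_sum {c a b : ι → ℕ} {M : ℕ} (s : Finset ι)
    (hcM : ∀ i, c i ≤ M) (hcab : ∀ i, c i ≤ a i * b i) :
    (∑ i ∈ s, c i) ^ 2 ≤ M * (∑ i ∈ s, a i) * ∑ i ∈ s, b i := by
  have hc (i : ι) : (c i : ℝ) ≤ √M * (√(a i) * √(b i)) := by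
    rw [← Real.sqrt_mul (by positivity), ← Real.sqrt_mul (by positivity),
      Real.le_sqrt (by positivity) (by positivity)]
    exact_mod_cast (pow_two (c i)).trans_le (Nat.mul_le_mul (hcM i) (hcab i))
  have key : ((∑ i ∈ s, c i : ℕ) : ℝ) ≤ √M * (√(∑ i ∈ s, (a i : ℝ)) * √(∑ i ∈ s, (b i : ℝ))) := by
    push_cast
    calc ∑ i ∈ s, (c i : ℝ) ≤ ∑ i ∈ s, √M * (√(a i) * √(b i)) := sum_le_sum fun i _ => hc i
      _ ≤ _ := by
        rw [← mul_sum]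
        gcongr
        exact Real.sum_sqrt_mul_sqrt_le s (fun _ => by positivity) (fun _ => by positivity)
  have := pow_le_pow_left₀ (by positivity) key 2
  rw [mul_pow, mul_pow, Real.sq_sqrt (by positivity), Real.sq_sqrt (by positivity),
    Real.sq_sqrt (by positivity), ← mul_assoc] at this
  exact_mod_cast this

lemma sq_card_le_of_injOn_slices (w : ι → α) (f : ι → β) (g : ι → γ) (s : Finset ι) {M : ℕ}
    (hinj : Set.InjOn (fun i => (w i, f i, g i)) s) (hM : ∀ a, #{i ∈ s | w i = a} ≤ M) :
    #s ^ 2 ≤ M * #(s.image fun i => (w i, f i)) * #(s.image fun i => (w i, g i)) := by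
  rw [card_image_pair_eq_sum, card_image_pair_eq_sum, card_eq_sum_card_image w s]
  refine sq_sum_le_mul_sum_mul_sum _ hM fun a => ?_
  rw [← card_product]
  refine card_le_card_of_injOn (fun i => (f i, g i)) (fun i hi => ?_) fun i hi j hj hij => ?_
  · simp only [coe_product, Set.mem_prod, coe_image]
    exact ⟨Set.mem_image_of_mem f hi, Set.mem_image_of_mem g hi⟩
  · simp only [coe_filter, Set.mem_ofPred_eq] at hi hj
    refine hinj hi.1 hj.1 ?_
    simp_all

end Combinatorics

section Slopes

variable {Z : Type*} [AddCommGroup Z] [Module ℝ Z]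

lemma piSlope_prod_injective {r r' : Option ℝ} (h : r ≠ r') :
    Function.Injective fun g : Z × Z => (piSlope r g, piSlope r' g) := by
  rintro ⟨a, b⟩ ⟨a', b'⟩ hg
  simp only [Prod.mk.injEq] at hg ⊢
  obtain ⟨e, e'⟩ := hg
  rcases r with _ | c <;> rcases r' with _ | c' <;> simp only [piSlope] at e e'
  · exact absurd rfl h
  · subst e; exact ⟨add_right_cancel e', rfl⟩
  · subst e'; exact ⟨add_right_cancel e, rfl⟩
  · have hc : c - c' ≠ 0 := sub_ne_zero.2 fun hc => h (by rw [hc])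
    have hb : b = b' := smul_right_injective Z hc (by linear_combination (norm := module) e - e')
    subst hb
    exact ⟨add_right_cancel e, rfl⟩

noncomputable def dualSum (rinf : Option ℝ) (s : ℝ) (p : (Z × Z) × (Z × Z)) : Z :=
  s • piSlope rinf p.1 + piSlope (some (-1)) p.2

lemma piSlope_neg_one_eq_of_dualSum_eq {rinf : Option ℝ} {s : ℝ} {p q : (Z × Z) × (Z × Z)}
    (h : dualSum rinf s p = dualSum rinf s q) (h1 : piSlope rinf p.1 = piSlope rinf q.1) :
    piSlope (some (-1)) p.2 = piSlope (some (-1)) q.2 := by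
  rw [dualSum, dualSum, h1] at h
  exact add_left_cancel h

lemma injOn_dualSum_piSlope_piSlope {r1 r2 : Option ℝ} (h12 : r1 ≠ r2) (rinf : Option ℝ) (s : ℝ)
    {G : Finset (Z × Z)} (hG : Set.InjOn (piSlope (some (-1))) (G : Set (Z × Z))) :
    Set.InjOn (fun p => (dualSum rinf s p, piSlope r1 p.1, piSlope r2 p.1))
      ((G : Set (Z × Z)) ×ˢ (G : Set (Z × Z))) := by
  intro p hp q hq hpq
  simp only [Set.mem_prod, mem_coe, Prod.mk.injEq] at hp hq hpq
  have h1 : p.1 = q.1 := piSlope_prod_injective h12 (Prod.ext hpq.2.1 hpq.2.2)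
  exact Prod.ext h1 <| hG hp.2 hq.2 <| piSlope_neg_one_eq_of_dualSum_eq hpq.1 (by rw [h1])

lemma card_filter_dualSum_eq_le [DecidableEq Z] {r0 rinf : Option ℝ} (h0inf : r0 ≠ rinf) (s : ℝ)
    {G : Finset (Z × Z)} (hG : Set.InjOn (piSlope (some (-1))) (G : Set (Z × Z))) (v : Z) :
    #{p ∈ fiberPairs (piSlope r0) G | dualSum rinf s p = v} ≤ #(G.image (piSlope rinf)) := by
  refine card_le_card_of_injOn (fun p => piSlope rinf p.1) (fun p hp => ?_) fun p hp q hq hpq => ?_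
  · simp only [coe_filter, mem_fiberPairs, Set.mem_ofPred_eq] at hp
    exact mem_image_of_mem _ hp.1.1
  · simp only [coe_filter, mem_fiberPairs, Set.mem_ofPred_eq] at hp hq
    have h2 : p.2 = q.2 := hG hp.1.2.1 hq.1.2.1 <|
      piSlope_neg_one_eq_of_dualSum_eq (hp.2.trans hq.2.symm) hpq
    have h0 : piSlope r0 p.1 = piSlope r0 q.1 := by rw [hp.1.2.2, hq.1.2.2, h2]
    have h1 : p.1 = q.1 := piSlope_prod_injective h0inf (Prod.ext h0 hpq)
    exact Prod.ext h1 h2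

end Slopes

lemma IsDualSlope.card_image_le {r0 rinf r r' : Option ℝ} {s : ℝ}
    (hd : IsDualSlope r0 rinf s r r') {Z : Type} [AddCommGroup Z] [Module ℝ Z] [DecidableEq Z]
    (G : Finset (Z × Z)) :
    #((fiberPairs (piSlope r0) G).image fun p => (dualSum rinf s p, piSlope r p.1)) ≤
      #(G.image (piSlope r)) * #(G.image (piSlope r')) := by
  obtain ⟨x, y, z, -, -, hxyz⟩ := hd
  -- On fibre pairs the `z`-term of the dual identity vanishes.
  have hfactor : ((fiberPairs (piSlope r0) G).image fun p => (dualSum rinf s p, piSlope r p.1)) =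
      ((fiberPairs (piSlope r0) G).image fun p => (piSlope r p.1, piSlope r' p.2)).image
        fun ab => (x • ab.1 + y • ab.2, ab.1) := by
    rw [image_image]
    refine image_congr fun p hp => ?_
    rw [mem_coe, mem_fiberPairs] at hp
    simp only [Function.comp, dualSum, hxyz Z p.1 p.2, hp.2.2, sub_self, smul_zero, add_zero]
  rw [hfactor, ← card_product]
  refine Finset.card_image_le.trans (card_le_card fun ab hab => ?_)
  obtain ⟨p, hp, rfl⟩ := mem_image.1 hab
  rw [mem_fiberPairs] at hp
  exact mem_product.2 ⟨mem_image_of_mem _ hp.1, mem_image_of_mem _ hp.2.1⟩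

lemma card_pow_four_le_of_isDualSlope {r0 rinf r1 r2 r1' r2' : Option ℝ} {s : ℝ}
    (h0inf : r0 ≠ rinf) (hd1 : IsDualSlope r0 rinf s r1 r1') (hd2 : IsDualSlope r0 rinf s r2 r2')
    (h12 : r1 ≠ r2) {Z : Type} [AddCommGroup Z] [Module ℝ Z] [DecidableEq Z]
    {G : Finset (Z × Z)} (hG : Set.InjOn (piSlope (some (-1))) (G : Set (Z × Z))) {M : ℕ}
    (hM : ∀ r ∈ ({r0, r1, r1', r2, r2', rinf} : Finset (Option ℝ)), #(G.image (piSlope r)) ≤ M) :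
    #G ^ 4 ≤ M ^ 7 := by
  set P := fiberPairs (piSlope r0) G
  have hGP : #G ^ 2 ≤ M * #P :=
    (sq_card_le_card_image_mul_card_fiberPairs _ G).trans (by gcongr; exact hM r0 (by simp))
  have hP : #P ^ 2 ≤ M * (M * M) * (M * M) := by
    refine (sq_card_le_of_injOn_slices (dualSum rinf s) (fun p => piSlope r1 p.1)
      (fun p => piSlope r2 p.1) P (M := M) ?_ fun v => ?_).trans ?_
    · exact (injOn_dualSum_piSlope_piSlope h12 rinf s hG).mono fun p hp => by simp_all [P]
    · exact (card_filter_dualSum_eq_le h0inf s hG v).trans (hM rinf (by simp))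
    · gcongr
      · exact (hd1.card_image_le G).trans (Nat.mul_le_mul (hM r1 (by simp)) (hM r1' (by simp)))
      · exact (hd2.card_image_le G).trans (Nat.mul_le_mul (hM r2 (by simp)) (hM r2' (by simp)))
  calc #G ^ 4 = (#G ^ 2) ^ 2 := by ring
    _ ≤ (M * #P) ^ 2 := by gcongr
    _ = M ^ 2 * #P ^ 2 := by ring
    _ ≤ M ^ 2 * (M * (M * M) * (M * M)) := by gcongr
    _ = M ^ 7 := by ring

lemma Real.le_rpow_of_pow_le {a b q : ℝ} {m n : ℕ} (ha : 0 ≤ a) (hb : 0 ≤ b) (hn : n ≠ 0)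
    (hq : q * n = m) (h : a ^ n ≤ b ^ m) : a ≤ b ^ q := by
  rwa [← pow_le_pow_iff_left₀ ha (by positivity) hn, ← Real.rpow_natCast (b ^ q),
    ← Real.rpow_mul hb, hq, Real.rpow_natCast]

theorem SDR_six_slices_general (r0 rinf r1 r2 r1' r2' : Option ℝ) (s : ℝ)
    (h0inf : r0 ≠ rinf)
    (hd1 : IsDualSlope r0 rinf s r1 r1') (hd2 : IsDualSlope r0 rinf s r2 r2')
    (hdist : [r1, r2, r1', r2', some (-1), r0, rinf].Pairwise (· ≠ ·)) :
    SDR {r0, r1, r1', r2, r2', rinf} (7 / 4) := by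
  have h12 : r1 ≠ r2 := List.rel_of_pairwise_cons hdist (by simp)
  refine ⟨1, fun Z _ _ G hGfin hG => ?_⟩
  classical
  lift G to Finset (Z × Z) using hGfin
  have hncard (r : Option ℝ) : (piSlope r '' (G : Set (Z × Z))).ncard = #(G.image (piSlope r)) := by
    rw [← coe_image, Set.ncard_coe_finset]
  simp only [Set.ncard_coe_finset, hncard, one_mul]
  refine Real.le_rpow_of_pow_le (m := 7) (by positivity) (by positivity) four_ne_zero
    (by norm_num) ?_
  exact_mod_cast card_pow_four_le_of_isDualSlope h0inf hd1 hd2 h12 hG fun r hr =>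
    le_sup (f := fun r => #(G.image (piSlope r))) hr

/-- Theorem (flexible six-slice sums-differences estimate):
if `r₀, r_∞` are distinct proper slopes, `s ≠ 0`, and `r₁, r₂` are proper slopes
different from `r₀, r_∞` admitting dual slopes `r₁′, r₂′` such that
`r₁, r₂, r₁′, r₂′, -1, r₀, r_∞` are pairwise distinct, then
`SD({r₀, r₁, r₁′, r₂, r₂′, r_∞}, 7/4)` holds. -/
theorem SDR_six_slices (r0 rinf r1 r2 r1' r2' : Option ℝ) (s : ℝ) (hs : s ≠ 0)
    (h0 : r0 ≠ some (-1)) (hinf : rinf ≠ some (-1)) (h0inf : r0 ≠ rinf)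
    (h1p : r1 ≠ some (-1)) (h2p : r2 ≠ some (-1))
    (h10 : r1 ≠ r0) (h1inf : r1 ≠ rinf) (h20 : r2 ≠ r0) (h2inf : r2 ≠ rinf)
    (hd1 : IsDualSlope r0 rinf s r1 r1') (hd2 : IsDualSlope r0 rinf s r2 r2')
    (hdist : [r1, r2, r1', r2', some (-1), r0, rinf].Pairwise (· ≠ ·)) :
    SDR {r0, r1, r1', r2, r2', rinf} (7 / 4) :=
  SDR_six_slices_general r0 rinf r1 r2 r1' r2' s h0inf hd1 hd2 hdist
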